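/- Let E be a finite-dimensional real inner product space, let S_1, …, S_K be linear subspaces of E, and fix a class index y. Let z ∈ E admit a decomposition z = s + e with s ∈ S_y, ‖e‖ ≤ ε, and ‖s‖ ≥ γ > 0, and let α ∈ (0, π/2] be such that for every j ≠ y and every unit vector u ∈ S_y, ‖P_{S_j} u‖ ≤ cos α. If γ · sin α > 2ε, then dist(z, S_y) < dist(z, S_j) for every j ≠ y; that is, the smallest subspace residual is uniquely attained at class y. -/

import Mathlib

/-!
The residual of `z = s + e` with respect to `S_y` is at most `‖e‖ ≤ ε`, since `s ∈ S_y`.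
For `j ≠ y`, the angle condition and Pythagoras give `‖s - P_{S_j} s‖ ≥ ‖s‖ sin α ≥ γ sin α`,
so the residual of `z` with respect to `S_j` is at least `γ sin α - ε > ε`.
-/

open Metric

namespace Submodule

variable {𝕜 E : Type*} [RCLike 𝕜] [NormedAddCommGroup E] [InnerProductSpace 𝕜 E]

theorem infDist_eq_norm_sub_starProjection (K : Submodule 𝕜 E) [K.HasOrthogonalProjection]
    (x : E) : infDist x (K : Set E) = ‖x - K.starProjection x‖ := by
  rw [infDist_eq_iInf, starProjection_minimal]
  simp only [dist_eq_norm]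
  rfl

theorem norm_starProjection_le_of_forall_norm_eq_one {V W : Submodule 𝕜 E}
    [W.HasOrthogonalProjection] {c : ℝ} (h : ∀ u ∈ V, ‖u‖ = 1 → ‖W.starProjection u‖ ≤ c)
    {v : E} (hv : v ∈ V) : ‖W.starProjection v‖ ≤ c * ‖v‖ := by
  rcases eq_or_ne v 0 with rfl | hv0
  · simp
  have hpos : 0 < ‖v‖ := norm_pos_iff.mpr hv0
  have hunit := h (((‖v‖⁻¹ : ℝ) : 𝕜) • v) (V.smul_mem _ hv) (by
    rw [norm_smul, RCLike.norm_ofReal, abs_inv, abs_norm, inv_mul_cancel₀ hpos.ne'])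
  rw [map_smul, norm_smul, RCLike.norm_ofReal, abs_inv, abs_norm, inv_mul_le_iff₀ hpos]
    at hunit
  linarith

theorem mul_sin_le_norm_sub_starProjection (K : Submodule 𝕜 E) [K.HasOrthogonalProjection]
    {x : E} {α : ℝ} (hsin : 0 ≤ Real.sin α) (h : ‖K.starProjection x‖ ≤ Real.cos α * ‖x‖) :
    ‖x‖ * Real.sin α ≤ ‖x - K.starProjection x‖ := by
  have hpyth : ‖x‖ ^ 2 = ‖K.starProjection x‖ ^ 2 + ‖x - K.starProjection x‖ ^ 2 := by
    simpa [starProjection_orthogonal] using norm_sq_eq_add_norm_sq_starProjection x K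
  have hproj_sq : ‖K.starProjection x‖ ^ 2 ≤ (Real.cos α * ‖x‖) ^ 2 :=
    pow_le_pow_left₀ (norm_nonneg _) h 2
  refine (pow_le_pow_iff_left₀ (by positivity) (norm_nonneg _) two_ne_zero).1 ?_
  nlinarith [Real.sin_sq_add_cos_sq α]

end Submodule

theorem stmt_10_general {E : Type*} [NormedAddCommGroup E] [InnerProductSpace ℝ E]
    [FiniteDimensional ℝ E]
    (K : ℕ) (S : Fin K → Submodule ℝ E) (y : Fin K)
    (z s e : E) (ε γ α : ℝ)
    (hz : z = s + e) (hs : s ∈ S y) (he : ‖e‖ ≤ ε)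
    (hγ : 0 < γ) (hsγ : ‖s‖ ≥ γ)
    (hang : ∀ j, j ≠ y → ∀ u : E, u ∈ S y → ‖u‖ = 1 →
      ‖((S j).orthogonalProjection u : E)‖ ≤ Real.cos α)
    (hmargin : γ * Real.sin α > 2 * ε) :
    ∀ j, j ≠ y →
      Metric.infDist z (S y : Set E) < Metric.infDist z (S j : Set E) := by
  intro j hj
  have hε : 0 ≤ ε := (norm_nonneg e).trans he
  have hsin : 0 < Real.sin α := pos_of_mul_pos_right (by linarith) hγ.le
  have hdist : dist s z ≤ ε := by simpa [hz, dist_eq_norm] using he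
  have hnear : infDist z (S y : Set E) ≤ ε :=
    (infDist_le_dist_of_mem hs).trans (by rwa [dist_comm])
  have hfar : γ * Real.sin α ≤ infDist s (S j : Set E) := by
    rw [(S j).infDist_eq_norm_sub_starProjection]
    calc γ * Real.sin α ≤ ‖s‖ * Real.sin α := by gcongr
      _ ≤ _ := (S j).mul_sin_le_norm_sub_starProjection hsin.le
          (Submodule.norm_starProjection_le_of_forall_norm_eq_one (hang j hj) hs)
  linarith [infDist_le_infDist_add_dist (x := s) (y := z) (s := (S j : Set E))]

/-- **Unique residual minimizer under coverage and separation.**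
If `z = s + e` with `s ∈ S_y`, `‖e‖ ≤ ε`, `‖s‖ ≥ γ > 0`, every unit vector `u ∈ S_y`
satisfies `‖P_{S_j} u‖ ≤ cos α` for all `j ≠ y` (with `α ∈ (0, π/2]`), and
`γ sin α > 2ε`, then `dist(z, S_y) < dist(z, S_j)` for every `j ≠ y`. -/
theorem stmt_10 {E : Type*} [NormedAddCommGroup E] [InnerProductSpace ℝ E]
    [FiniteDimensional ℝ E]
    (K : ℕ) (S : Fin K → Submodule ℝ E) (y : Fin K)
    (z s e : E) (ε γ α : ℝ)
    (hz : z = s + e) (hs : s ∈ S y) (he : ‖e‖ ≤ ε)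
    (hγ : 0 < γ) (hsγ : ‖s‖ ≥ γ)
    (hα0 : 0 < α) (hα1 : α ≤ Real.pi / 2)
    (hang : ∀ j, j ≠ y → ∀ u : E, u ∈ S y → ‖u‖ = 1 →
      ‖((S j).orthogonalProjection u : E)‖ ≤ Real.cos α)
    (hmargin : γ * Real.sin α > 2 * ε) :
    ∀ j, j ≠ y →
      Metric.infDist z (S y : Set E) < Metric.infDist z (S j : Set E) :=
  stmt_10_general K S y z s e ε γ α hz hs he hγ hsγ hang hmargin
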